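/- arXiv:dg-ga/9411003 — 7 statements merged into one kernel-verified Lean document; each statement's English description precedes it below -/
import Mathlib

section
/- Let (X,d) be a metric space, x, p, q, p', q' ∈ X, r > 0 and κ ≥ 0. Assume d(x,p') = d(x,q') = r, d(x,p) = r + d(p',p), d(x,q) = r + d(q',q) (i.e. p' and q' lie on minimal geodesics from x to p and from x to q at distance r from x), and assume the excess bound e_{p,q}(x) = d(x,p) + d(x,q) − d(p,q) ≤ κ. Then (2r² − d(p',q')²)/(2r²) ≤ −1 + 2κ/r; that is, the cosine of the Euclidean comparison angle at x of the triangle with side lengths d(x,p') = d(x,q') = r and d(p',q') is at most −1 + 2κ/r. -/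
/-- Small excess forces the Euclidean comparison angle at `x` of the triangle
with vertices `x, p', q'` (where `p'`, `q'` lie on minimal geodesics from `x`
to `p`, `q` at distance `r` from `x`) to have cosine at most `-1 + 2κ/r`. -/
theorem excess_comparison_angle {X : Type*} [MetricSpace X]
    (x p q p' q' : X) (r κ : ℝ) (hr : 0 < r) (hκ : 0 ≤ κ)
    (hp' : dist x p' = r) (hq' : dist x q' = r)
    (hp : dist x p = r + dist p' p) (hq : dist x q = r + dist q' q)
    (hex : dist x p + dist x q - dist p q ≤ κ) :
    (2 * r ^ 2 - dist p' q' ^ 2) / (2 * r ^ 2) ≤ -1 + 2 * κ / r := by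
  have htri : dist p q ≤ dist p p' + dist p' q' + dist q' q := dist_triangle4 p p' q' q
  have hc : dist p p' = dist p' p := dist_comm p p'
  have hkey : 2 * r - κ ≤ dist p' q' := by linarith
  have hd : (0:ℝ) ≤ dist p' q' := dist_nonneg
  rw [div_le_iff₀ (by positivity)]
  have h2 : -1 + 2 * κ / r = (-r + 2*κ)/r := by field_simp
  rw [h2, div_mul_eq_mul_div, le_div_iff₀ hr]
  have hsq : 4*r^2 - 4*κ*r ≤ dist p' q' ^ 2 := by
    rcases le_or_gt (2*r - κ) 0 with h | h
    · nlinarith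
    · nlinarith [mul_le_mul hkey hkey (le_of_lt h) hd]
  nlinarith
end

section
/- Let E be a real inner product space, x, p, q ∈ E, r > 0 and κ ≥ 0. Assume ‖p − x‖ ≥ r, ‖q − x‖ ≥ r, κ ≤ ‖p − x‖ + ‖q − x‖, and the excess bound ‖p − x‖ + ‖q − x‖ − ‖p − q‖ ≤ κ. Then ⟪p − x, q − x⟫ ≤ (−1 + 2κ/r)·‖p − x‖·‖q − x‖. In particular, if κ < r/2 then the angle at x between p and q is strictly greater than π/2. -/
/-- Euclidean model: small excess at `x` forces an obtuse angle at `x`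
between `p` and `q`. -/
theorem excess_obtuse_angle {E : Type*} [NormedAddCommGroup E]
    [InnerProductSpace ℝ E] (x p q : E) (r κ : ℝ) (hr : 0 < r) (hκ : 0 ≤ κ)
    (hp : r ≤ ‖p - x‖) (hq : r ≤ ‖q - x‖)
    (hκ' : κ ≤ ‖p - x‖ + ‖q - x‖)
    (hex : ‖p - x‖ + ‖q - x‖ - ‖p - q‖ ≤ κ) :
    (inner ℝ (p - x) (q - x) : ℝ) ≤ (-1 + 2 * κ / r) * ‖p - x‖ * ‖q - x‖ ∧
      (κ < r / 2 → Real.pi / 2 < InnerProductGeometry.angle (p - x) (q - x)) := by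
  set a := ‖p - x‖ with ha
  set b := ‖q - x‖ with hb
  have hd : ‖p - q‖ ^ 2 = a ^ 2 + b ^ 2 - 2 * (inner ℝ (p - x) (q - x) : ℝ) := by
    have : p - q = (p - x) - (q - x) := by abel
    rw [this, @norm_sub_sq_real]; ring
  have hdnn : (0:ℝ) ≤ ‖p - q‖ := norm_nonneg _
  have hab : a + b - κ ≤ ‖p - q‖ := by linarith
  have hd2 : (a + b - κ) ^ 2 ≤ ‖p - q‖ ^ 2 := by
    nlinarith [sq_nonneg (a + b - κ)]
  have key : (inner ℝ (p - x) (q - x) : ℝ) ≤ (-1 + 2 * κ / r) * a * b := by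
    have hra : r * a ≤ a * b := by nlinarith
    have hrb : r * b ≤ a * b := by nlinarith
    have h1 : (inner ℝ (p - x) (q - x) : ℝ) ≤ -(a*b) + κ*(a+b) - κ^2/2 := by nlinarith
    have h2 : κ * (a + b) ≤ 2 * κ * (a * b) / r := by
      rw [le_div_iff₀ hr]
      nlinarith
    have : (-1 + 2 * κ / r) * a * b = -(a*b) + 2 * κ * (a*b) / r := by
      field_simp
    rw [this]
    nlinarith [sq_nonneg κ]
  refine ⟨key, fun hκr => ?_⟩
  have hapos : 0 < a := lt_of_lt_of_le hr hp
  have hbpos : 0 < b := lt_of_lt_of_le hr hq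
  have hneg : (inner ℝ (p - x) (q - x) : ℝ) / (a * b) < 0 := by
    apply div_neg_of_neg_of_pos _ (mul_pos hapos hbpos)
    have h4 : 2 * κ / r < 1 := by
      rw [div_lt_iff₀ hr]
      linarith
    have : (-1 + 2 * κ / r) < 0 := by linarith
    calc (inner ℝ (p - x) (q - x) : ℝ) ≤ (-1 + 2 * κ / r) * a * b := key
      _ < 0 := by nlinarith [mul_pos hapos hbpos]
  have hnle : ¬ Real.arccos ((inner ℝ (p - x) (q - x) : ℝ) / (a * b)) ≤ Real.pi / 2 := by
    rw [Real.arccos_le_pi_div_two]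
    linarith
  rw [InnerProductGeometry.angle]
  exact lt_of_not_ge hnle
end

section
/- Let E be a real inner product space, p, q₁, q₂ ∈ E and ν > 0. Assume ⟪q₂ − q₁, p − q₁⟫ ≥ 0 (the angle at q₁ between the segment to q₂ and the segment to p is at most π/2) and ‖q₂ − p‖ ≥ ν·‖q₁ − p‖. Then ⟪q₁ − p, q₂ − p⟫ ≤ (1/ν)·‖q₁ − p‖·‖q₂ − p‖; that is, the cosine of the angle at p between q₁ and q₂ is at most 1/ν. -/
/-- Euclidean model of Gromov's critical-point lemma: if the angle at `q₁`
between the segment to `q₂` and the segment to `p` is at most `π/2` and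
`‖q₂ - p‖ ≥ ν ‖q₁ - p‖`, then the cosine of the angle at `p` between `q₁`
and `q₂` is at most `1/ν`. -/
theorem critical_point_angle {E : Type*} [NormedAddCommGroup E]
    [InnerProductSpace ℝ E] (p q₁ q₂ : E) (ν : ℝ) (hν : 0 < ν)
    (hcrit : 0 ≤ (inner ℝ (q₂ - q₁) (p - q₁) : ℝ))
    (hfar : ν * ‖q₁ - p‖ ≤ ‖q₂ - p‖) :
    (inner ℝ (q₁ - p) (q₂ - p) : ℝ) ≤ (1 / ν) * ‖q₁ - p‖ * ‖q₂ - p‖ := by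
  have key : (inner ℝ (q₁ - p) (q₂ - p) : ℝ) ≤ ‖q₁ - p‖ ^ 2 := by
    have h1 : q₂ - q₁ = (q₂ - p) - (q₁ - p) := by abel
    have h2 : p - q₁ = -(q₁ - p) := by abel
    rw [h1, h2, inner_neg_right, inner_sub_left] at hcrit
    have := real_inner_self_eq_norm_sq (q₁ - p)
    have hsym := real_inner_comm (q₁ - p) (q₂ - p)
    nlinarith
  have hn : 0 ≤ ‖q₁ - p‖ := norm_nonneg _
  have h3 : ν * (inner ℝ (q₁ - p) (q₂ - p) : ℝ) ≤ ‖q₁ - p‖ * ‖q₂ - p‖ := by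
    nlinarith
  rw [div_mul_eq_mul_div, div_mul_eq_mul_div, le_div_iff₀ hν]
  linarith
end

section
/- Let ν ≥ 1 and let x, y, z be positive real numbers satisfying z ≥ ν·x, y ≤ x + z, and z² ≤ x² + y² − 2xy·cos(19π/36). Then (x² + z² − y²)/(2xz) ≤ sin(π/36) + (1 + sin(π/36))·(1/ν). Consequently, the Euclidean comparison angle θ̄ with cos θ̄ = (x² + z² − y²)/(2xz) satisfies θ̄ ≥ arccos(sin(π/36) + (1 + sin(π/36))/ν). -/
open Real

/-- Euclidean computation underlying the critical-point angle estimate. -/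
theorem comparison_angle_estimate (ν x y z : ℝ) (hν : 1 ≤ ν)
    (hx : 0 < x) (hy : 0 < y) (hz : 0 < z)
    (hzx : ν * x ≤ z) (hyxz : y ≤ x + z)
    (hlaw : z ^ 2 ≤ x ^ 2 + y ^ 2 - 2 * x * y * Real.cos (19 * π / 36)) :
    (x ^ 2 + z ^ 2 - y ^ 2) / (2 * x * z) ≤
        Real.sin (π / 36) + (1 + Real.sin (π / 36)) * (1 / ν) ∧
      Real.arccos (Real.sin (π / 36) + (1 + Real.sin (π / 36)) / ν) ≤
        Real.arccos ((x ^ 2 + z ^ 2 - y ^ 2) / (2 * x * z)) := by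
  have hν0 : 0 < ν := lt_of_lt_of_le one_pos hν
  have hcos : Real.cos (19 * π / 36) = -Real.sin (π / 36) := by
    have : (19 : ℝ) * π / 36 = π / 36 + π / 2 := by ring
    rw [this, Real.cos_add_pi_div_two]
  set s := Real.sin (π / 36) with hs
  have hs0 : 0 ≤ s := Real.sin_nonneg_of_nonneg_of_le_pi (by positivity)
    (by nlinarith [Real.pi_pos])
  rw [hcos] at hlaw
  -- numerator bound: x² + z² - y² ≤ 2x² + 2xys
  have hnum : x ^ 2 + z ^ 2 - y ^ 2 ≤ 2 * x ^ 2 + 2 * x * y * s := by nlinarith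
  have hxz : x ≤ z / ν := by
    rw [le_div_iff₀ hν0]; linarith [hzx]
  have hxz' : ν * x ≤ z := hzx
  have h2xz : 0 < 2 * x * z := by positivity
  have hmain : (x ^ 2 + z ^ 2 - y ^ 2) / (2 * x * z) ≤ s + (1 + s) * (1 / ν) := by
    rw [div_le_iff₀ h2xz]
    have hyz : y ≤ x + z := hyxz
    -- (s + (1+s)/ν) * 2xz = 2xzs + (1+s)*2xz/ν ≥ 2x² + 2xys ≥ num
    have key : 2 * x ^ 2 + 2 * x * y * s ≤ (s + (1 + s) * (1 / ν)) * (2 * x * z) := by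
      have h1 : x * ν ≤ z := by linarith [hzx]
      have h2 : (s + (1 + s) * (1 / ν)) * (2 * x * z) =
          2 * x * z * s + (1 + s) * (2 * x * z) / ν := by field_simp
      rw [h2]
      have h3 : 2 * x ^ 2 + 2 * x * x * s ≤ (1 + s) * (2 * x * z) / ν := by
        rw [le_div_iff₀ hν0]
        nlinarith [mul_le_mul_of_nonneg_left h1 (show (0:ℝ) ≤ 2 * x * (1 + s) by positivity)]
      nlinarith [mul_le_mul_of_nonneg_left hyz (show (0:ℝ) ≤ 2 * x * s by positivity)]
    linarith
  refine ⟨hmain, ?_⟩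
  have hlow : -1 ≤ (x ^ 2 + z ^ 2 - y ^ 2) / (2 * x * z) := by
    rw [le_div_iff₀ h2xz]
    nlinarith
  have : (x ^ 2 + z ^ 2 - y ^ 2) / (2 * x * z) ≤ s + (1 + s) / ν := by
    rw [div_eq_mul_inv (1 + s) ν, ← one_div]; linarith [hmain]
  unfold Real.arccos
  have := Real.monotone_arcsin this
  linarith
end

section
/- Let G be a group, ℓ : G → ℝ a function with ℓ(g⁻¹) = ℓ(g) for all g ∈ G, and r ∈ ℝ. Assume G is generated by the set {g ∈ G : ℓ(g) < 2r}. Let α₁, …, α_s ∈ G be a 'short basis' chosen greedily, i.e. for each k: α_k does not lie in the subgroup H_{k−1} generated by {α₁, …, α_{k−1}}, and ℓ(α_k) ≤ ℓ(g) for every g ∉ H_{k−1}. Then: (i) ℓ(α_i) ≤ ℓ(α_j) whenever i ≤ j; (ii) ℓ(α_i·α_j⁻¹) ≥ max{ℓ(α_i), ℓ(α_j)} for all i < j; and (iii) ℓ(α_k) < 2r for every k. -/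
/-- The abstract short-basis lemma: for a greedily chosen short basis with
respect to a symmetric length function on a group generated by elements of
length `< 2r`, lengths are monotone, products `αᵢ αⱼ⁻¹` are no shorter than
either factor, and every basis element has length `< 2r`. -/
theorem short_basis {G : Type*} [Group G] (ℓ : G → ℝ)
    (hsymm : ∀ g : G, ℓ g⁻¹ = ℓ g) (r : ℝ)
    (hgen : Subgroup.closure {g : G | ℓ g < 2 * r} = ⊤)
    (s : ℕ) (α : Fin s → G)
    (hnot : ∀ k : Fin s, α k ∉ Subgroup.closure (α '' {i : Fin s | i < k}))
    (hmin : ∀ k : Fin s, ∀ g : G,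
      g ∉ Subgroup.closure (α '' {i : Fin s | i < k}) → ℓ (α k) ≤ ℓ g) :
    (∀ i j : Fin s, i ≤ j → ℓ (α i) ≤ ℓ (α j)) ∧
      (∀ i j : Fin s, i < j →
        max (ℓ (α i)) (ℓ (α j)) ≤ ℓ (α i * (α j)⁻¹)) ∧
      (∀ k : Fin s, ℓ (α k) < 2 * r) := by
  have hmono : ∀ i j : Fin s, i ≤ j → ℓ (α i) ≤ ℓ (α j) := by
    intro i j hij
    rcases eq_or_lt_of_le hij with h | h
    · rw [h]
    · apply hmin i
      intro hmem
      exact hnot j (Subgroup.closure_mono (Set.image_mono (f := α)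
        (fun x hx => lt_of_lt_of_le hx hij)) hmem)
  refine ⟨hmono, ?_, ?_⟩
  · intro i j hij
    have hβ : α i * (α j)⁻¹ ∉ Subgroup.closure (α '' {i : Fin s | i < j}) := by
      intro hmem
      have hi : α i ∈ Subgroup.closure (α '' {i : Fin s | i < j}) :=
        Subgroup.subset_closure ⟨i, hij, rfl⟩
      have : α j ∈ Subgroup.closure (α '' {i : Fin s | i < j}) := by
        have := mul_mem (inv_mem hmem) hi
        simpa [mul_assoc] using this
      exact hnot j this
    have hj : ℓ (α j) ≤ ℓ (α i * (α j)⁻¹) := hmin j _ hβ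
    exact max_le (le_trans (hmono i j hij.le) hj) hj
  · intro k
    by_contra h
    push_neg at h
    have hsub : {g : G | ℓ g < 2 * r} ⊆
        (Subgroup.closure (α '' {i : Fin s | i < k}) : Set G) := by
      intro g hg
      by_contra hg'
      exact absurd (lt_of_le_of_lt (hmin k g hg') hg) (not_lt.2 h)
    have : (⊤ : Subgroup G) ≤ Subgroup.closure (α '' {i : Fin s | i < k}) := by
      rw [← hgen]
      exact Subgroup.closure_le _ |>.2 hsub
    exact hnot k (this (Subgroup.mem_top _))
end

section
/- Let Z be a metric space, ε > 0, and let X, Y ⊆ Z be nonempty compact subsets with Hausdorff distance d_H(X,Y) < ε. Then there exist finite subsets A ⊆ X and B ⊆ Y and a bijection φ : A → B such that: (1) d(a, a') > ε for all distinct a, a' ∈ A, and d(b, b') > ε for all distinct b, b' ∈ B; (2) A is 7ε-dense in X (every point of X is within distance 7ε of A) and B is 7ε-dense in Y; (3) d(a, φ(a)) < ε for every a ∈ A. -/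
open Metric

/-- Existence of `ε`-separated, `7ε`-dense nets in Hausdorff-close compact
sets, together with an `ε`-close bijection between them. -/
theorem hausdorff_close_nets {Z : Type*} [MetricSpace Z] (ε : ℝ) (hε : 0 < ε)
    (X Y : Set Z) (hXne : X.Nonempty) (hYne : Y.Nonempty)
    (hXc : IsCompact X) (hYc : IsCompact Y)
    (hH : Metric.hausdorffDist X Y < ε) :
    ∃ (A B : Set Z), A ⊆ X ∧ B ⊆ Y ∧ A.Finite ∧ B.Finite ∧
      ∃ φ : A → B, Function.Bijective φ ∧
        (∀ a a' : A, a ≠ a' → ε < dist (a : Z) (a' : Z)) ∧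
        (∀ b b' : B, b ≠ b' → ε < dist (b : Z) (b' : Z)) ∧
        (∀ x ∈ X, ∃ a ∈ A, dist x a ≤ 7 * ε) ∧
        (∀ y ∈ Y, ∃ b ∈ B, dist y b ≤ 7 * ε) ∧
        (∀ a : A, dist (a : Z) (φ a : Z) < ε) := by
  classical
  set S : Set (Set Z) := {A | A ⊆ X ∧ ∀ a ∈ A, ∀ a' ∈ A, a ≠ a' → 3 * ε < dist a a'} with hS
  obtain ⟨A, hAmax⟩ : ∃ A, Maximal (· ∈ S) A := by
    apply zorn_subset
    intro c hcS hchain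
    refine ⟨⋃₀ c, ⟨?_, ?_⟩, fun s hs => Set.subset_sUnion_of_mem hs⟩
    · exact Set.sUnion_subset fun s hs => (hcS hs).1
    · rintro a ⟨s, hs, ha⟩ a' ⟨s', hs', ha'⟩ hne
      rcases hchain.total hs hs' with h | h
      · exact (hcS hs').2 a (h ha) a' ha' hne
      · exact (hcS hs).2 a ha a' (h ha') hne
  obtain ⟨hAX, hAsep⟩ := hAmax.prop
  -- A is 3ε-dense in X
  have hAdense : ∀ x ∈ X, ∃ a ∈ A, dist x a ≤ 3 * ε := by
    intro x hx
    by_contra h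
    push_neg at h
    have hxA : x ∉ A := fun hxA => by
      have := h x hxA; simp at this; nlinarith
    have hins : insert x A ∈ S := by
      constructor
      · exact Set.insert_subset hx hAX
      · rintro a (rfl | ha) a' (rfl | ha') hne
        · exact absurd rfl hne
        · exact h a' ha'
        · rw [dist_comm]; exact h a ha
        · exact hAsep a ha a' ha' hne
    have := hAmax.eq_of_subset hins (Set.subset_insert x A)
    exact hxA (this ▸ Set.mem_insert x A)
  -- A is finite
  have hAfin : A.Finite := by
    obtain ⟨t, htfin, hXt⟩ := (totallyBounded_iff.mp hXc.totallyBounded) ε hε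
    have hex : ∀ a ∈ A, ∃ y ∈ t, a ∈ ball y ε := fun a ha => by simpa using hXt (hAX ha)
    choose g hg hgball using hex
    set G : Z → Z := fun z => if h : z ∈ A then g z h else z with hG
    have hinj : Set.InjOn G A := by
      intro a ha a' ha' heq
      simp only [hG, dif_pos ha, dif_pos ha'] at heq
      by_contra hne
      have h1 := mem_ball.mp (hgball a ha)
      have h2 := mem_ball.mp (hgball a' ha')
      rw [heq] at h1
      have h3 := hAsep a ha a' ha' hne
      have := dist_triangle a (g a' ha') a'
      rw [dist_comm (g a' ha') a'] at this
      nlinarith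
    refine Set.Finite.of_finite_image (htfin.subset ?_) hinj
    rintro y ⟨a, ha, rfl⟩
    simp only [hG, dif_pos ha]
    exact hg a ha
  have hfin : EMetric.hausdorffEdist X Y ≠ ⊤ :=
    hausdorffEdist_ne_top_of_nonempty_of_bounded hXne hYne hXc.isBounded hYc.isBounded
  have hchoose : ∀ a ∈ A, ∃ y ∈ Y, dist a y < ε := fun a ha =>
    exists_dist_lt_of_hausdorffDist_lt (hAX ha) hH hfin
  choose f hfY hfd using hchoose
  set F : Z → Z := fun z => if h : z ∈ A then f z h else hYne.choose with hF
  have hFY : ∀ a ∈ A, F a ∈ Y := by intro a ha; simp only [hF, dif_pos ha]; exact hfY a ha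
  have hFd : ∀ a ∈ A, dist a (F a) < ε := by
    intro a ha; simp only [hF, dif_pos ha]; exact hfd a ha
  have hFsep : ∀ a ∈ A, ∀ a' ∈ A, a ≠ a' → ε < dist (F a) (F a') := by
    intro a ha a' ha' hne
    have h1 := hFd a ha
    have h2 := hFd a' ha'
    have h3 := hAsep a ha a' ha' hne
    have := dist_triangle4 a (F a) (F a') a'
    rw [dist_comm (F a') a'] at this
    linarith
  have hFinj : Set.InjOn F A := by
    intro a ha a' ha' heq
    by_contra hne
    have := hFsep a ha a' ha' hne
    rw [heq, dist_self] at this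
    linarith
  set B : Set Z := F '' A with hB
  have hBY : B ⊆ Y := by rintro b ⟨a, ha, rfl⟩; exact hFY a ha
  refine ⟨A, B, hAX, hBY, hAfin, hAfin.image F, ?_⟩
  refine ⟨fun a => ⟨F a, ⟨a, a.2, rfl⟩⟩, ⟨?_, ?_⟩, ?_, ?_, ?_, ?_, ?_⟩
  · intro a a' h
    exact Subtype.ext (hFinj a.2 a'.2 (congrArg Subtype.val h))
  · rintro ⟨b, a, ha, rfl⟩
    exact ⟨⟨a, ha⟩, rfl⟩
  · intro a a' hne
    have := hAsep a a.2 a' a'.2 (fun h => hne (Subtype.ext h))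
    linarith
  · rintro ⟨b, a, ha, rfl⟩ ⟨b', a', ha', rfl⟩ hne
    exact hFsep a ha a' ha' (fun h => hne (Subtype.ext (by simp [h])))
  · intro x hx
    obtain ⟨a, ha, hd⟩ := hAdense x hx
    exact ⟨a, ha, by linarith⟩
  · intro y hy
    obtain ⟨x, hxX, hxy⟩ := exists_dist_lt_of_hausdorffDist_lt' hy hH hfin
    obtain ⟨a, ha, hd⟩ := hAdense x hxX
    refine ⟨F a, ⟨a, ha, rfl⟩, ?_⟩
    have h1 := hFd a ha
    have := dist_triangle4 y x a (F a)
    rw [dist_comm x y] at hxy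
    linarith
  · intro a
    exact hFd a a.2
end

section
/- Let n ≥ 1, μ > 1, and let p, q₁, …, q_N be points of Euclidean space ℝⁿ with q_i ≠ p for all i, such that for all i < j: ⟪q_j − q_i, p − q_i⟫ ≥ 0 and ‖q_j − p‖ ≥ μ·‖q_i − p‖. Then N ≤ (1 + 2/√(2 − 2/μ))ⁿ. -/
open Metric MeasureTheory Set

/-- Euclidean model of the bound on the number of critical points whose
distances to `p` grow geometrically. -/
theorem critical_points_bound (n : ℕ) (hn : 1 ≤ n) (μ : ℝ) (hμ : 1 < μ)
    (N : ℕ) (p : EuclideanSpace ℝ (Fin n)) (q : Fin N → EuclideanSpace ℝ (Fin n))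
    (hne : ∀ i, q i ≠ p)
    (hcrit : ∀ i j : Fin N, i < j → 0 ≤ (inner ℝ (q j - q i) (p - q i) : ℝ))
    (hgrow : ∀ i j : Fin N, i < j → μ * ‖q i - p‖ ≤ ‖q j - p‖) :
    (N : ℝ) ≤ (1 + 2 / Real.sqrt (2 - 2 / μ)) ^ n := by
  have hμ0 : (0:ℝ) < μ := lt_trans one_pos hμ
  have h2 : (0:ℝ) < 2 - 2 / μ := by
    have : 2 / μ < 2 := by
      rw [div_lt_iff₀ hμ0]; nlinarith
    linarith
  set r : ℝ := Real.sqrt (2 - 2 / μ) with hr_def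
  have hr0 : 0 < r := Real.sqrt_pos.mpr h2
  -- unit vectors
  set u : Fin N → EuclideanSpace ℝ (Fin n) := fun i => ‖q i - p‖⁻¹ • (q i - p) with hu_def
  have hqp : ∀ i, (0:ℝ) < ‖q i - p‖ := fun i =>
    norm_pos_iff.mpr (sub_ne_zero.mpr (hne i))
  have hnorm_u : ∀ i, ‖u i‖ = 1 := by
    intro i
    rw [hu_def]
    simp [norm_smul, abs_of_nonneg (inv_nonneg.mpr (hqp i).le), inv_mul_cancel₀ (hqp i).ne']
  -- inner product bound
  have hinner : ∀ i j : Fin N, i < j → (inner ℝ (u i) (u j) : ℝ) ≤ 1 / μ := by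
    intro i j hij
    have h1 : (inner ℝ (q i - p) (q j - p) : ℝ) ≤ ‖q i - p‖ ^ 2 := by
      have := hcrit i j hij
      have hexp : (inner ℝ (q j - q i) (p - q i) : ℝ)
          = -(inner ℝ (q i - p) (q j - p) : ℝ) + ‖q i - p‖ ^ 2 := by
        have e1 : q j - q i = (q j - p) - (q i - p) := by abel
        have e2 : p - q i = -(q i - p) := by abel
        rw [e1, e2, inner_sub_left, inner_neg_right, inner_neg_right,
          real_inner_self_eq_norm_sq, real_inner_comm]
        ring
      nlinarith [this, hexp]
    have hiu : (inner ℝ (u i) (u j) : ℝ)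
        = ‖q i - p‖⁻¹ * (‖q j - p‖⁻¹ * inner ℝ (q i - p) (q j - p)) := by
      rw [hu_def]; rw [real_inner_smul_left, real_inner_smul_right]
    rw [hiu]
    have hb : μ * ‖q i - p‖ ≤ ‖q j - p‖ := hgrow i j hij
    have hai := hqp i
    have haj := hqp j
    calc ‖q i - p‖⁻¹ * (‖q j - p‖⁻¹ * inner ℝ (q i - p) (q j - p))
        ≤ ‖q i - p‖⁻¹ * (‖q j - p‖⁻¹ * ‖q i - p‖ ^ 2) := by
          apply mul_le_mul_of_nonneg_left _ (inv_nonneg.mpr hai.le)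
          exact mul_le_mul_of_nonneg_left h1 (inv_nonneg.mpr haj.le)
      _ = ‖q i - p‖ / ‖q j - p‖ := by field_simp
      _ ≤ 1 / μ := by
          rw [div_le_div_iff₀ haj hμ0]
          nlinarith
  -- pairwise distance bound
  have hdist : ∀ i j : Fin N, i ≠ j → r ≤ dist (u i) (u j) := by
    have key : ∀ i j : Fin N, i < j → r ≤ dist (u i) (u j) := by
      intro i j hij
      have h1 : ‖u i - u j‖ ^ 2 = 2 - 2 * inner ℝ (u i) (u j) := by
        rw [norm_sub_sq_real, hnorm_u, hnorm_u]; ring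
      have h2' : 2 - 2 / μ ≤ ‖u i - u j‖ ^ 2 := by
        have h3 := hinner i j hij
        have h4 : 2 / μ = 2 * (1 / μ) := by ring
        rw [h1]; linarith
      rw [dist_eq_norm, hr_def]
      calc Real.sqrt (2 - 2 / μ) ≤ Real.sqrt (‖u i - u j‖ ^ 2) := Real.sqrt_le_sqrt h2'
        _ = ‖u i - u j‖ := Real.sqrt_sq (norm_nonneg _)
    intro i j hij
    rcases lt_or_gt_of_ne hij with h | h
    · exact key i j h
    · rw [dist_comm]; exact key j i h
  -- volume packing
  have hdisj : Pairwise (Function.onFun Disjoint fun i => ball (u i) (r / 2)) := by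
    intro i j hij
    exact ball_disjoint_ball (by linarith [hdist i j hij])
  have hsub : (⋃ i, ball (u i) (r / 2)) ⊆ ball (0 : EuclideanSpace ℝ (Fin n)) (1 + r / 2) := by
    rintro x hx
    simp only [mem_iUnion, mem_ball] at hx ⊢
    obtain ⟨i, hi⟩ := hx
    calc dist x 0 ≤ dist x (u i) + dist (u i) 0 := dist_triangle _ _ _
      _ < r / 2 + 1 := by
          have : dist (u i) 0 = 1 := by rw [dist_zero_right, hnorm_u]
          linarith
      _ = 1 + r / 2 := by ring
  have hmeas := measure_iUnion (μ := (volume : Measure (EuclideanSpace ℝ (Fin n)))) hdisj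
    (fun i => measurableSet_ball)
  have hball : ∀ x : EuclideanSpace ℝ (Fin n), ∀ s : ℝ, 0 ≤ s →
      volume (ball x s) = ENNReal.ofReal (s ^ n) * volume (ball (0 : EuclideanSpace ℝ (Fin n)) 1) := by
    haveI : Nontrivial (EuclideanSpace ℝ (Fin n)) := by
      exact Module.nontrivial_of_finrank_pos (R := ℝ)
        (by rw [finrank_euclideanSpace_fin]; omega)
    intro x s hs
    rw [Measure.addHaar_ball volume x hs, finrank_euclideanSpace_fin]
  set v := volume (ball (0 : EuclideanSpace ℝ (Fin n)) 1) with hv_def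
  have hv_pos : 0 < v := measure_ball_pos _ _ one_pos
  have hv_fin : v < ⊤ := measure_ball_lt_top
  have hsum : (N : ENNReal) * (ENNReal.ofReal ((r / 2) ^ n) * v)
      ≤ ENNReal.ofReal ((1 + r / 2) ^ n) * v := by
    calc (N : ENNReal) * (ENNReal.ofReal ((r / 2) ^ n) * v)
        = ∑ _i : Fin N, ENNReal.ofReal ((r / 2) ^ n) * v := by
          rw [Finset.sum_const, Finset.card_univ, Fintype.card_fin, nsmul_eq_mul]
      _ = ∑ i : Fin N, volume (ball (u i) (r / 2)) := by
          refine Finset.sum_congr rfl fun i _ => ?_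
          rw [hball (u i) (r / 2) (by linarith)]
      _ = volume (⋃ i, ball (u i) (r / 2)) := by rw [hmeas, tsum_fintype]
      _ ≤ volume (ball (0 : EuclideanSpace ℝ (Fin n)) (1 + r / 2)) := measure_mono hsub
      _ = ENNReal.ofReal ((1 + r / 2) ^ n) * v := hball _ _ (by linarith)
  -- cancel v
  have hcancel : (N : ENNReal) * ENNReal.ofReal ((r / 2) ^ n) ≤ ENNReal.ofReal ((1 + r / 2) ^ n) := by
    rw [← ENNReal.mul_le_mul_iff_left hv_pos.ne' hv_fin.ne]
    calc (N : ENNReal) * ENNReal.ofReal ((r / 2) ^ n) * v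
        = (N : ENNReal) * (ENNReal.ofReal ((r / 2) ^ n) * v) := by ring
      _ ≤ _ := hsum
  -- back to real
  have hreal : (N : ℝ) * (r / 2) ^ n ≤ (1 + r / 2) ^ n := by
    have hN : ((N : ENNReal)) = ENNReal.ofReal (N : ℝ) := by
      simp [ENNReal.ofReal_natCast]
    rw [hN, ← ENNReal.ofReal_mul (by positivity)] at hcancel
    exact (ENNReal.ofReal_le_ofReal_iff (by positivity)).mp hcancel
  have hrn : (0:ℝ) < (r / 2) ^ n := by positivity
  rw [← le_div_iff₀ hrn] at hreal
  calc (N : ℝ) ≤ (1 + r / 2) ^ n / (r / 2) ^ n := hreal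
    _ = ((1 + r / 2) / (r / 2)) ^ n := (div_pow _ _ _).symm
    _ = (1 + 2 / r) ^ n := by
        congr 1
        field_simp
        ring
end
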